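/- Let K be an even positive integer and let G be a K-edge-connected finite simple graph. Let ℓ ≥ 3 and let Z_1, ..., Z_{ℓ-1} be pairwise disjoint nonempty vertex sets with W = Z_1 ∪ ... ∪ Z_{ℓ-1} ≠ V(G), such that: each ∂Z_i is a K-cut; ∂W is a K-cut; G has no edges between Z_i and Z_j whenever 1 ≤ i, j ≤ ℓ-1 and |i - j| ≥ 2; |∂Z_i ∩ ∂Z_{i+1}| = K/2 for each i = 1, ..., ℓ-2; and |∂Z_1 ∩ ∂W| = K/2 and |∂Z_{ℓ-1} ∩ ∂W| = K/2. Suppose w_2, w_3, ..., w_ℓ is a path in G (consecutive vertices adjacent in G) with w_2 ∈ Z_2 ∩ H̃(Z_1) ∩ H̃(Z_2), w_i ∈ Z_i ∩ H̃(Z_i) for i = 3, ..., ℓ-1, and w_ℓ ∈ V(∂W) ∖ W. Then both w_{ℓ-1} and w_ℓ are hubs for W, that is, w_{ℓ-1}, w_ℓ ∈ H̃(W). -/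

import Mathlib

open SimpleGraph

variable {V : Type*}

/-- The cut `∂X`: the set of edges of `G` with exactly one endpoint in `X`. -/
def cutEdges (G : SimpleGraph V) (X : Set V) : Set (Sym2 V) :=
  {e | e ∈ G.edgeSet ∧ ∃ u v, e = s(u, v) ∧ u ∈ X ∧ v ∉ X}

/-- `G` is `K`-edge-connected: at least two vertices, connected, and every cut has
at least `K` edges. -/
def KEdgeConnected (G : SimpleGraph V) (K : ℕ) : Prop :=
  Nontrivial V ∧ G.Connected ∧
    ∀ X : Set V, X.Nonempty → X ≠ Set.univ → K ≤ (cutEdges G X).ncard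

/-- `∂X` is a `K`-cut. -/
def IsKCut (G : SimpleGraph V) (K : ℕ) (X : Set V) : Prop :=
  X.Nonempty ∧ X ≠ Set.univ ∧ (cutEdges G X).ncard = K

/-- The cuts `∂X` and `∂Y` cross. -/
def Crossing (X Y : Set V) : Prop :=
  (X ∩ Y).Nonempty ∧ (X ∩ Yᶜ).Nonempty ∧ (Xᶜ ∩ Y).Nonempty ∧ (Xᶜ ∩ Yᶜ).Nonempty

/-- The set of vertices reachable from `u` in `T` after deleting the edge `e`;
for a spanning tree `T` and an edge `e` of `T` with endpoint `u`, this is the shore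
of the cut induced by `e` containing `u`. -/
def treeSide (T : SimpleGraph V) (u : V) (e : Sym2 V) : Set V :=
  {x | (T.deleteEdges {e}).Reachable u x}

/-- The congestion of the edge `(u,v)` of a spanning tree `T` of `G`. -/
noncomputable def edgeCong (G T : SimpleGraph V) (u v : V) : ℕ :=
  (cutEdges G (treeSide T u s(u, v))).ncard

/-- The spanning tree `T` of `G` has congestion at most `K`. -/
def CongAtMost (G T : SimpleGraph V) (K : ℕ) : Prop :=
  ∀ u v, T.Adj u v → edgeCong G T u v ≤ K

/-- The congestion of a spanning tree `T` of `G`. -/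
noncomputable def treeCongestion (G T : SimpleGraph V) : ℕ :=
  sSup {n | ∃ u v, T.Adj u v ∧ n = edgeCong G T u v}

/-- The spanning-tree congestion of `G`. -/
noncomputable def stc (G : SimpleGraph V) : ℕ :=
  sInf {n | ∃ T : SimpleGraph V, T ≤ G ∧ T.IsTree ∧ treeCongestion G T = n}

/-- `T_out(w,e)`: the vertex set of the component of the tree `H − e` not containing `w`
(the vertices of `H` that are no longer reachable from `w` after deleting `e`). -/
def treeOut (G : SimpleGraph V) (H : G.Subgraph) (w : V) (e : Sym2 V) : Set V :=
  {x ∈ H.verts | ¬ (H.deleteEdges {e}).spanningCoe.Reachable w x}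

/-- The rooted tree `(H, w)` is safe (with parameter `K`). -/
def SafeTree (G : SimpleGraph V) (K : ℕ) (H : G.Subgraph) (w : V) : Prop :=
  ∀ e ∈ H.edgeSet, (cutEdges G (treeOut G H w e)).ncard = K

/-- `V(∂X)`: the set of endpoints of edges of the cut `∂X`. -/
def cutVerts (G : SimpleGraph V) (X : Set V) : Set V :=
  {v | ∃ e ∈ cutEdges G X, v ∈ e}

/-- `w` is a hub for `Z`: `w ∈ V(∂Z)` and there is a spanning tree `H` of the subgraph
of `G` induced by `Z ∪ {w}` such that `(H, w)` is a safe tree. -/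
def IsHub (G : SimpleGraph V) (K : ℕ) (Z : Set V) (w : V) : Prop :=
  w ∈ cutVerts G Z ∧
    ∃ H : G.Subgraph, H.verts = Z ∪ {w} ∧ H.coe.IsTree ∧ SafeTree G K H w

/-- `H̃(Z)`: the set of all hubs for `Z`. -/
def hubSet (G : SimpleGraph V) (K : ℕ) (Z : Set V) : Set V :=
  {w | IsHub G K Z w}

/-- `N(S)`: the set of vertices adjacent in `G` to some vertex of `S`. -/
def nbrSet (G : SimpleGraph V) (S : Set V) : Set V :=
  {v | ∃ u ∈ S, G.Adj u v}

/-- Edges of `∂X` with both endpoints in `S`. -/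
def cutRestrict (G : SimpleGraph V) (X S : Set V) : Set (Sym2 V) :=
  {e ∈ cutEdges G X | ∀ v ∈ e, v ∈ S}

/-!
The safe trees of `Z 1, …, Z (ℓ - 1)` (rooted at `w 2, …, w (ℓ - 1)`), joined by the path
`w 2, …, w (ℓ - 1)`, form a spanning tree of `W`; root it at `w (ℓ - 1)`. Deleting one of its
edges inside `Z j` cuts off the same set as in the safe tree of `Z j`, and deleting the path
edge `w j w (j + 1)` cuts off `Z 1 ∪ ⋯ ∪ Z j`, whose cut has `K` edges: consecutive sets
share exactly `K / 2` cut edges and non-consecutive ones none. Appending the edge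
`w (ℓ - 1) w ℓ`, whose far side is all of `W`, gives a safe tree rooted at `w ℓ`.
-/

section Cuts

variable {G : SimpleGraph V}

lemma mk_mem_cutEdges_iff {X : Set V} {a b : V} :
    s(a, b) ∈ cutEdges G X ↔ G.Adj a b ∧ (a ∈ X ↔ b ∉ X) := by
  constructor
  · rintro ⟨hab, u, v, huv, hu, hv⟩
    rcases Sym2.eq_iff.1 huv with ⟨rfl, rfl⟩ | ⟨rfl, rfl⟩ <;> exact ⟨hab, by tauto⟩
  · rintro ⟨hab, hX⟩
    by_cases ha : a ∈ X
    · exact ⟨hab, a, b, rfl, ha, hX.1 ha⟩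
    · exact ⟨hab, b, a, Sym2.eq_swap, by tauto, ha⟩

lemma mem_cutVerts_of_adj {X : Set V} {a b : V} (hab : G.Adj a b) (ha : a ∈ X) (hb : b ∉ X) :
    a ∈ cutVerts G X :=
  ⟨s(a, b), mk_mem_cutEdges_iff.2 ⟨hab, by tauto⟩, Sym2.mem_mk_left a b⟩

lemma mk_mem_cutEdges_inter_iff {X Y : Set V} (hXY : Disjoint X Y) {a b : V} :
    s(a, b) ∈ cutEdges G X ∩ cutEdges G Y ↔
      G.Adj a b ∧ (a ∈ X ∧ b ∈ Y ∨ a ∈ Y ∧ b ∈ X) := by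
  have ha : a ∈ X → a ∉ Y := fun h => Set.disjoint_left.1 hXY h
  have hb : b ∈ X → b ∉ Y := fun h => Set.disjoint_left.1 hXY h
  simp only [Set.mem_inter_iff, mk_mem_cutEdges_iff]
  tauto

lemma cutEdges_union_of_disjoint {X Y : Set V} (hXY : Disjoint X Y) :
    cutEdges G (X ∪ Y) = (cutEdges G X ∪ cutEdges G Y) \ (cutEdges G X ∩ cutEdges G Y) := by
  ext e
  induction e with
  | h a b =>
    have ha : a ∈ X → a ∉ Y := fun h => Set.disjoint_left.1 hXY h
    have hb : b ∈ X → b ∉ Y := fun h => Set.disjoint_left.1 hXY h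
    simp only [Set.mem_sdiff, Set.mem_union, Set.mem_inter_iff, mk_mem_cutEdges_iff]
    tauto

lemma ncard_cutEdges_union_add [Finite V] {X Y : Set V} (hXY : Disjoint X Y) :
    (cutEdges G (X ∪ Y)).ncard + 2 * (cutEdges G X ∩ cutEdges G Y).ncard =
      (cutEdges G X).ncard + (cutEdges G Y).ncard := by
  have hsub : cutEdges G X ∩ cutEdges G Y ⊆ cutEdges G X ∪ cutEdges G Y :=
    Set.inter_subset_left.trans Set.subset_union_left
  rw [← Set.ncard_union_add_ncard_inter, ← Set.ncard_sdiff_add_ncard_of_subset hsub,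
    cutEdges_union_of_disjoint hXY]
  ring

end Cuts

namespace SimpleGraph

lemma Reachable.mem_of_adj_closed {G : SimpleGraph V} {S : Set V}
    (hS : ∀ x ∈ S, ∀ y, G.Adj x y → y ∈ S) {a b : V} (h : G.Reachable a b) (ha : a ∈ S) :
    b ∈ S := by
  rw [reachable_iff_reflTransGen] at h
  induction h with
  | refl => exact ha
  | tail _ hbc ih => exact hS _ ih _ hbc

lemma Reachable.deleteEdges_or {G : SimpleGraph V} {r u v : V}
    (h : G.Reachable r u) :
    (G.deleteEdges {s(u, v)}).Reachable r u ∨ (G.deleteEdges {s(u, v)}).Reachable r v := by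
  suffices ∀ x, G.Reachable r x → (G.deleteEdges {s(u, v)}).Reachable r x ∨
      (G.deleteEdges {s(u, v)}).Reachable r u ∨ (G.deleteEdges {s(u, v)}).Reachable r v by
    have := this u h
    tauto
  intro x hx
  rw [reachable_iff_reflTransGen] at hx
  induction hx with
  | refl => exact Or.inl (Reachable.refl r)
  | @tail a b _ hab ih =>
    by_cases he : s(a, b) = s(u, v)
    · rcases Sym2.eq_iff.1 he with ⟨rfl, rfl⟩ | ⟨rfl, rfl⟩ <;> tauto
    · have hab' : (G.deleteEdges {s(u, v)}).Adj a b := by simp [hab, he]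
      rcases ih with ih | ih
      · exact Or.inl (ih.trans hab'.reachable)
      · exact Or.inr ih

namespace Subgraph

variable {G : SimpleGraph V} {H H' : G.Subgraph} {e : Sym2 V}

lemma reachable_coe_of_reachable_spanningCoe {x y : V}
    (h : H.spanningCoe.Reachable x y) (hx : x ∈ H.verts) (hy : y ∈ H.verts) :
    H.coe.Reachable ⟨x, hx⟩ ⟨y, hy⟩ := by
  obtain ⟨p⟩ := h
  induction p with
  | nil => rfl
  | @cons x c y hxc _ ih =>
    have hc : c ∈ H.verts := H.edge_vert (hxc : H.Adj x c).symm
    exact (Subgraph.Adj.coe (hxc : H.Adj x c)).reachable.trans (ih hc hy)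

lemma isAcyclic_coe_iff :
    H.coe.IsAcyclic ↔
      ∀ ⦃u v⦄, H.Adj u v → ¬ (H.deleteEdges {s(u, v)}).spanningCoe.Reachable u v := by
  constructor
  · intro hH u v huv hr
    have hu := H.edge_vert huv
    have hv := H.edge_vert huv.symm
    have hr' := reachable_coe_of_reachable_spanningCoe hr hu hv
    rw [coe_deleteEdges_eq] at hr'
    refine isBridge_iff.1 (isAcyclic_iff_forall_adj_isBridge.1 hH huv.coe) (hr'.mono ?_)
    exact deleteEdges_anti (by simp)
  · intro h
    refine IsAcyclic.embedding H.coeEmbeddingSpanningCoe ?_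
    refine isAcyclic_iff_forall_adj_isBridge.2 fun u v huv => ?_
    rw [isBridge_iff, deleteEdges_spanningCoe_eq]
    exact h huv


lemma Connected.reachable_spanningCoe (hH : H.Connected) {x y : V} (hx : x ∈ H.verts)
    (hy : y ∈ H.verts) : H.spanningCoe.Reachable x y :=
  (hH.preconnected ⟨x, hx⟩ ⟨y, hy⟩).map H.coeEmbeddingSpanningCoe.toHom

lemma spanningCoe_deleteEdges_mono (h : H ≤ H') (s : Set (Sym2 V)) :
    (H.deleteEdges s).spanningCoe ≤ (H'.deleteEdges s).spanningCoe := by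
  intro x y hxy
  simp only [spanningCoe_adj, deleteEdges_adj] at hxy ⊢
  exact ⟨h.2 hxy.1, hxy.2⟩

lemma spanningCoe_le_deleteEdges (h : H ≤ H') (he : e ∉ H.edgeSet) :
    H.spanningCoe ≤ (H'.deleteEdges {e}).spanningCoe := by
  intro x y hxy
  simp only [spanningCoe_adj, deleteEdges_adj, Set.mem_singleton_iff] at hxy ⊢
  exact ⟨h.2 hxy, fun hxe => he (hxe ▸ hxy)⟩

end Subgraph

end SimpleGraph

section TreeOut

variable {G : SimpleGraph V} {H : G.Subgraph} {r : V} {e : Sym2 V}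

lemma root_notMem_treeOut : r ∉ treeOut G H r e := fun h => h.2 (Reachable.refl r)

lemma reachable_of_notMem_treeOut {x : V} (hx : x ∈ H.verts) (hxo : x ∉ treeOut G H r e) :
    (H.deleteEdges {e}).spanningCoe.Reachable r x :=
  by_contra fun h => hxo ⟨hx, h⟩

lemma mem_treeOut_of_adj {x y : V} (hx : x ∈ treeOut G H r e) (hxy : H.Adj x y)
    (hne : s(x, y) ≠ e) : y ∈ treeOut G H r e := by
  refine ⟨H.edge_vert hxy.symm, fun hy => hx.2 (hy.trans (Adj.reachable ?_))⟩
  simp only [Subgraph.spanningCoe_adj, Subgraph.deleteEdges_adj, Set.mem_singleton_iff]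
  exact ⟨hxy.symm, by rwa [Sym2.eq_swap]⟩

lemma treeOut_eq_of_closed {S : Set V} (hSH : S ⊆ H.verts) (hr : r ∉ S)
    (hS : ∀ x ∈ S, ∀ y, H.Adj x y → s(x, y) ≠ e → y ∈ S)
    (hreach : ∀ x ∈ H.verts, x ∉ S → (H.deleteEdges {e}).spanningCoe.Reachable r x) :
    treeOut G H r e = S := by
  ext x
  refine ⟨fun hx => by_contra fun hxS => hx.2 (hreach x hx.1 hxS),
    fun hxS => ⟨hSH hxS, fun hrx => hr (hrx.symm.mem_of_adj_closed (fun a ha b hab => ?_) hxS)⟩⟩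
  simp only [Subgraph.spanningCoe_adj, Subgraph.deleteEdges_adj, Set.mem_singleton_iff] at hab
  exact hS a ha b hab.1 hab.2

lemma not_reachable_of_mem_treeOut {a b : V} (ha : a ∈ treeOut G H r e) (hb : b ∈ H.verts)
    (hbo : b ∉ treeOut G H r e) : ¬ (H.deleteEdges {e}).spanningCoe.Reachable a b :=
  fun hab => ha.2 ((reachable_of_notMem_treeOut hb hbo).trans hab.symm)

lemma exists_eq_mk_mem_treeOut (ht : H.coe.IsTree) (hr : r ∈ H.verts) (he : e ∈ H.edgeSet) :
    ∃ a b, e = s(a, b) ∧ a ∈ treeOut G H r e ∧ b ∉ treeOut G H r e := by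
  induction e with
  | h u v =>
    have hu : u ∈ H.verts := H.edge_vert he
    have hv : v ∈ H.verts := H.edge_vert (Subgraph.mem_edgeSet.1 he).symm
    have hbridge := Subgraph.isAcyclic_coe_iff.1 ht.isAcyclic he
    have hru := (Subgraph.Connected.reachable_spanningCoe ⟨ht.connected⟩ hr hu).deleteEdges_or
      (v := v)
    rw [Subgraph.deleteEdges_spanningCoe_eq] at hru
    rcases hru with h | h
    · exact ⟨v, u, Sym2.eq_swap, ⟨hv, fun h' => hbridge (h.symm.trans h')⟩, fun h' => h'.2 h⟩
    · exact ⟨u, v, rfl, ⟨hu, fun h' => hbridge (h'.symm.trans h)⟩, fun h' => h'.2 h⟩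

lemma isAcyclic_coe_of_forall_treeOut
    (h : ∀ e ∈ H.edgeSet, ∃ r a b, e = s(a, b) ∧ a ∈ treeOut G H r e ∧ b ∉ treeOut G H r e) :
    H.coe.IsAcyclic := by
  refine Subgraph.isAcyclic_coe_iff.2 fun u v huv => ?_
  obtain ⟨r, a, b, hab, ha, hb⟩ := h _ (Subgraph.mem_edgeSet.2 huv)
  rcases Sym2.eq_iff.1 hab with ⟨rfl, rfl⟩ | ⟨rfl, rfl⟩
  · exact not_reachable_of_mem_treeOut ha (H.edge_vert huv.symm) hb
  · exact fun h' => not_reachable_of_mem_treeOut ha (H.edge_vert huv) hb h'.symm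

end TreeOut

section Glue

variable {G : SimpleGraph V} {H₁ H₂ : G.Subgraph} {v r : V} {e : Sym2 V}

lemma eq_of_mem_of_inter_eq_singleton (hv : H₁.verts ∩ H₂.verts = {v}) {x : V}
    (h₁ : x ∈ H₁.verts) (h₂ : x ∈ H₂.verts) : x = v :=
  hv.subset ⟨h₁, h₂⟩

lemma notMem_edgeSet_of_inter_eq_singleton (hv : H₁.verts ∩ H₂.verts = {v})
    (he : e ∈ H₁.edgeSet) : e ∉ H₂.edgeSet := by
  induction e with
  | h a b =>
    intro he₂
    have ha := eq_of_mem_of_inter_eq_singleton hv (H₁.edge_vert he) (H₂.edge_vert he₂)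
    have hb := eq_of_mem_of_inter_eq_singleton hv (H₁.edge_vert (Subgraph.mem_edgeSet.1 he).symm)
      (H₂.edge_vert (Subgraph.mem_edgeSet.1 he₂).symm)
    exact (Subgraph.mem_edgeSet.1 he).ne (ha.trans hb.symm)

lemma treeOut_sup_of_mem_left (hv : H₁.verts ∩ H₂.verts = {v}) (hH₂ : H₂.Connected)
    (hr : r ∈ H₂.verts) (he : e ∈ H₁.edgeSet) :
    treeOut G (H₁ ⊔ H₂) r e = treeOut G H₁ v e := by
  have hv₂ : v ∈ H₂.verts := (hv.superset rfl : v ∈ H₁.verts ∩ H₂.verts).2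
  have hreach₂ : ∀ x ∈ H₂.verts, ((H₁ ⊔ H₂).deleteEdges {e}).spanningCoe.Reachable r x :=
    fun x hx => (hH₂.reachable_spanningCoe hr hx).mono (Subgraph.spanningCoe_le_deleteEdges
      le_sup_right (notMem_edgeSet_of_inter_eq_singleton hv he))
  refine treeOut_eq_of_closed (fun x hx => Or.inl hx.1)
    (fun hro => root_notMem_treeOut (eq_of_mem_of_inter_eq_singleton hv hro.1 hr ▸ hro)) ?_ ?_
  · rintro x hx y (hxy | hxy) hne
    · exact mem_treeOut_of_adj hx hxy hne
    · exact absurd (eq_of_mem_of_inter_eq_singleton hv hx.1 (H₂.edge_vert hxy) ▸ hx)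
        root_notMem_treeOut
  · rintro x (hx | hx) hxo
    · exact (hreach₂ v hv₂).trans ((reachable_of_notMem_treeOut hx hxo).mono
        (Subgraph.spanningCoe_deleteEdges_mono le_sup_left _))
    · exact hreach₂ x hx

lemma treeOut_sup_of_mem_right (hv : H₁.verts ∩ H₂.verts = {v}) (hH₁ : H₁.Connected)
    (he : e ∈ H₂.edgeSet) (hvo : v ∉ treeOut G H₂ r e) :
    treeOut G (H₁ ⊔ H₂) r e = treeOut G H₂ r e := by
  have hv₁ : v ∈ H₁.verts := (hv.superset rfl : v ∈ H₁.verts ∩ H₂.verts).1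
  have hv₂ : v ∈ H₂.verts := (hv.superset rfl : v ∈ H₁.verts ∩ H₂.verts).2
  have hmono := Subgraph.spanningCoe_deleteEdges_mono (le_sup_right : H₂ ≤ H₁ ⊔ H₂) {e}
  refine treeOut_eq_of_closed (fun x hx => Or.inr hx.1) root_notMem_treeOut ?_ ?_
  · rintro x hx y (hxy | hxy) hne
    · exact absurd (eq_of_mem_of_inter_eq_singleton hv (H₁.edge_vert hxy) hx.1 ▸ hx) hvo
    · exact mem_treeOut_of_adj hx hxy hne
  · rintro x (hx | hx) hxo
    · refine ((reachable_of_notMem_treeOut hv₂ hvo).mono hmono).trans ?_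
      exact (hH₁.reachable_spanningCoe hv₁ hx).mono (Subgraph.spanningCoe_le_deleteEdges
        le_sup_left (notMem_edgeSet_of_inter_eq_singleton (Set.inter_comm _ _ ▸ hv) he))
    · exact (reachable_of_notMem_treeOut hx hxo).mono hmono

lemma treeOut_sup_of_mem_right_of_mem (hv : H₁.verts ∩ H₂.verts = {v}) (hr : r ∈ H₂.verts)
    (hvo : v ∈ treeOut G H₂ r e) :
    treeOut G (H₁ ⊔ H₂) r e = H₁.verts ∪ treeOut G H₂ r e := by
  refine treeOut_eq_of_closed (Set.union_subset_union le_rfl fun x hx => hx.1) ?_ ?_ ?_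
  · rintro (hr₁ | hro)
    · exact root_notMem_treeOut (eq_of_mem_of_inter_eq_singleton hv hr₁ hr ▸ hvo)
    · exact root_notMem_treeOut hro
  · rintro x (hx | hx) y (hxy | hxy) hne
    · exact Or.inl (H₁.edge_vert hxy.symm)
    · exact Or.inr (mem_treeOut_of_adj
        (eq_of_mem_of_inter_eq_singleton hv hx (H₂.edge_vert hxy) ▸ hvo) hxy hne)
    · exact Or.inl (H₁.edge_vert hxy.symm)
    · exact Or.inr (mem_treeOut_of_adj hx hxy hne)
  · rintro x (hx | hx) hxo
    · exact absurd (Or.inl hx) hxo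
    · exact (reachable_of_notMem_treeOut hx fun h => hxo (Or.inr h)).mono
        (Subgraph.spanningCoe_deleteEdges_mono le_sup_right _)

lemma isTree_coe_sup (h₁ : H₁.coe.IsTree) (h₂ : H₂.coe.IsTree)
    (hv : H₁.verts ∩ H₂.verts = {v}) : (H₁ ⊔ H₂).coe.IsTree := by
  have hv₁₂ : v ∈ H₁.verts ∩ H₂.verts := hv.superset rfl
  refine ⟨(Subgraph.connected_sup (Subgraph.Connected.preconnected ⟨h₁.connected⟩)
    (Subgraph.Connected.preconnected ⟨h₂.connected⟩) ⟨v, hv₁₂⟩).coe,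
    isAcyclic_coe_of_forall_treeOut fun e he => ⟨v, ?_⟩⟩
  rcases Subgraph.edgeSet_sup ▸ he with he | he
  · rw [treeOut_sup_of_mem_left hv ⟨h₂.connected⟩ hv₁₂.2 he]
    exact exists_eq_mk_mem_treeOut h₁ hv₁₂.1 he
  · rw [treeOut_sup_of_mem_right hv ⟨h₁.connected⟩ he root_notMem_treeOut]
    exact exists_eq_mk_mem_treeOut h₂ hv₁₂.2 he

lemma isTree_coe_subgraphOfAdj {u v : V} (h : G.Adj u v) : (G.subgraphOfAdj h).coe.IsTree :=
  ⟨(Subgraph.subgraphOfAdj_connected h).coe, IsAcyclic.of_card_le_two (Set.encard_pair h.ne).le⟩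

lemma treeOut_subgraphOfAdj {u v : V} (h : G.Adj u v) :
    treeOut G (G.subgraphOfAdj h) v s(u, v) = {u} := by
  have hbot : ((G.subgraphOfAdj h).deleteEdges {s(u, v)}).spanningCoe = ⊥ := by
    ext a b
    simp only [Subgraph.spanningCoe_adj, Subgraph.deleteEdges_adj, subgraphOfAdj_adj,
      Set.mem_singleton_iff, bot_adj]
    exact ⟨fun h' => h'.2 h'.1.symm, False.elim⟩
  ext x
  simp only [treeOut, hbot, reachable_bot, subgraphOfAdj_verts, Set.mem_ofPred_eq,
    Set.mem_insert_iff, Set.mem_singleton_iff]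
  constructor
  · rintro ⟨hx | hx, hne⟩
    · exact hx
    · exact absurd hx.symm hne
  · rintro rfl
    exact ⟨Or.inl rfl, h.ne.symm⟩

end Glue

def HasSafeSpanningTree (G : SimpleGraph V) (K : ℕ) (S : Set V) (w : V) : Prop :=
  ∃ H : G.Subgraph, H.verts = S ∧ H.coe.IsTree ∧ SafeTree G K H w

section SafeSpanningTree

variable {G : SimpleGraph V} {K : ℕ}

lemma mem_hubSet_iff {Z : Set V} {w : V} :
    w ∈ hubSet G K Z ↔ w ∈ cutVerts G Z ∧ HasSafeSpanningTree G K (Z ∪ {w}) w :=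
  Iff.rfl

lemma HasSafeSpanningTree.union {S T : Set V} {v : V} (hS : HasSafeSpanningTree G K S v)
    (hT : HasSafeSpanningTree G K T v) (hST : S ∩ T = {v}) :
    HasSafeSpanningTree G K (S ∪ T) v := by
  obtain ⟨A, rfl, hA, hAsafe⟩ := hS
  obtain ⟨B, rfl, hB, hBsafe⟩ := hT
  have hvB : v ∈ B.verts := (hST.superset rfl : v ∈ A.verts ∩ B.verts).2
  refine ⟨A ⊔ B, Subgraph.verts_sup A B, isTree_coe_sup hA hB hST, fun e he => ?_⟩
  rcases Subgraph.edgeSet_sup ▸ he with he | he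
  · rw [treeOut_sup_of_mem_left hST ⟨hB.connected⟩ hvB he]
    exact hAsafe e he
  · rw [treeOut_sup_of_mem_right hST ⟨hA.connected⟩ he root_notMem_treeOut]
    exact hBsafe e he

lemma HasSafeSpanningTree.insert {S : Set V} {u v : V} (hS : HasSafeSpanningTree G K S v)
    (hv : v ∈ S) (hcut : (cutEdges G S).ncard = K) (hvu : G.Adj v u) (hu : u ∉ S) :
    HasSafeSpanningTree G K (insert u S) u := by
  obtain ⟨A, rfl, hA, hAsafe⟩ := hS
  set E := G.subgraphOfAdj hvu
  have huE : u ∈ E.verts := by simp [E]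
  have hinter : A.verts ∩ E.verts = {v} := by
    ext x
    simp only [E, subgraphOfAdj_verts]
    aesop
  refine ⟨A ⊔ E, ?_, isTree_coe_sup hA (isTree_coe_subgraphOfAdj hvu) hinter, fun e he => ?_⟩
  · ext x
    simp only [E, Subgraph.verts_sup, subgraphOfAdj_verts]
    aesop
  rcases Subgraph.edgeSet_sup ▸ he with he | he
  · rw [treeOut_sup_of_mem_left hinter (Subgraph.subgraphOfAdj_connected hvu) huE he]
    exact hAsafe e he
  · obtain rfl : e = s(v, u) := by simpa [E] using he
    rw [treeOut_sup_of_mem_right_of_mem hinter huE (by simp [E, treeOut_subgraphOfAdj]),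
      treeOut_subgraphOfAdj, Set.union_singleton, Set.insert_eq_of_mem hv]
    exact hcut

end SafeSpanningTree

section Spine

variable {G : SimpleGraph V} {K n : ℕ} {Z : ℕ → Set V}

lemma biUnion_Icc_one_add_one (Z : ℕ → Set V) (j : ℕ) :
    ⋃ i ∈ Finset.Icc 1 (j + 1), Z i = (⋃ i ∈ Finset.Icc 1 j, Z i) ∪ Z (j + 1) := by
  rw [← Finset.insert_Icc_right_eq_Icc_add_one (by omega), Finset.set_biUnion_insert,
    Set.union_comm]

lemma subset_biUnion_Icc_one {i j : ℕ} (hi : 1 ≤ i) (hij : i ≤ j) :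
    Z i ⊆ ⋃ k ∈ Finset.Icc 1 j, Z k :=
  Set.subset_biUnion_of_mem (u := Z) (Finset.mem_Icc.2 ⟨hi, hij⟩)

lemma disjoint_biUnion_Icc_one (hdisj : ∀ i j, 1 ≤ i → i < j → j ≤ n → Disjoint (Z i) (Z j))
    {j : ℕ} (hj : j < n) : Disjoint (⋃ i ∈ Finset.Icc 1 j, Z i) (Z (j + 1)) := by
  simp only [Set.disjoint_iUnion_left, Finset.mem_Icc]
  exact fun i hi => hdisj i (j + 1) hi.1 (by omega) hj

lemma cutEdges_biUnion_Icc_one_inter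
    (hdisj : ∀ i j, 1 ≤ i → i < j → j ≤ n → Disjoint (Z i) (Z j))
    (hnoedge : ∀ i j, 1 ≤ i → i + 2 ≤ j → j ≤ n → ∀ u ∈ Z i, ∀ v ∈ Z j, ¬ G.Adj u v)
    {j : ℕ} (hj : 1 ≤ j) (hjn : j < n) :
    cutEdges G (⋃ i ∈ Finset.Icc 1 j, Z i) ∩ cutEdges G (Z (j + 1)) =
      cutEdges G (Z j) ∩ cutEdges G (Z (j + 1)) := by
  have hmem : ∀ a b, G.Adj a b → a ∈ ⋃ i ∈ Finset.Icc 1 j, Z i → b ∈ Z (j + 1) → a ∈ Z j := by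
    intro a b hab ha hb
    obtain ⟨i, hi, hai⟩ := Set.mem_iUnion₂.1 ha
    obtain ⟨hi₁, hij⟩ := Finset.mem_Icc.1 hi
    obtain rfl : i = j := by
      by_contra hne
      exact hnoedge i (j + 1) hi₁ (by omega) hjn a hai b hb hab
    exact hai
  have hsub := subset_biUnion_Icc_one (Z := Z) hj le_rfl
  ext e
  induction e with
  | h a b =>
    rw [mk_mem_cutEdges_inter_iff (disjoint_biUnion_Icc_one hdisj hjn),
      mk_mem_cutEdges_inter_iff (hdisj j (j + 1) hj (by omega) hjn)]
    constructor
    · rintro ⟨hab, ⟨ha, hb⟩ | ⟨ha, hb⟩⟩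
      · exact ⟨hab, Or.inl ⟨hmem a b hab ha hb, hb⟩⟩
      · exact ⟨hab, Or.inr ⟨ha, hmem b a hab.symm hb ha⟩⟩
    · rintro ⟨hab, ⟨ha, hb⟩ | ⟨ha, hb⟩⟩
      · exact ⟨hab, Or.inl ⟨hsub ha, hb⟩⟩
      · exact ⟨hab, Or.inr ⟨ha, hsub hb⟩⟩

lemma ncard_cutEdges_biUnion_Icc_one [Finite V] (hK : Even K)
    (hdisj : ∀ i j, 1 ≤ i → i < j → j ≤ n → Disjoint (Z i) (Z j))
    (hnoedge : ∀ i j, 1 ≤ i → i + 2 ≤ j → j ≤ n → ∀ u ∈ Z i, ∀ v ∈ Z j, ¬ G.Adj u v)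
    (hcuts : ∀ i, 1 ≤ i → i ≤ n → (cutEdges G (Z i)).ncard = K)
    (hhalf : ∀ i, 1 ≤ i → i < n →
      (cutEdges G (Z i) ∩ cutEdges G (Z (i + 1))).ncard = K / 2)
    {j : ℕ} (hj : 1 ≤ j) (hjn : j ≤ n) :
    (cutEdges G (⋃ i ∈ Finset.Icc 1 j, Z i)).ncard = K := by
  induction j, hj using Nat.le_induction with
  | base => simpa using hcuts 1 le_rfl hjn
  | succ j hj ih =>
    have hcount := ncard_cutEdges_union_add (G := G) (disjoint_biUnion_Icc_one hdisj hjn)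
    rw [← biUnion_Icc_one_add_one, cutEdges_biUnion_Icc_one_inter hdisj hnoedge hj hjn,
      ih (by omega), hcuts (j + 1) (by omega) hjn, hhalf j hj hjn] at hcount
    obtain ⟨t, rfl⟩ := hK
    omega

lemma hasSafeSpanningTree_biUnion_Icc_one {w : ℕ → V}
    (hdisj : ∀ i j, 1 ≤ i → i < j → j ≤ n → Disjoint (Z i) (Z j))
    (hcut : ∀ j, 2 ≤ j → j < n → (cutEdges G (⋃ i ∈ Finset.Icc 1 j, Z i)).ncard = K)
    (hpath : ∀ j, 2 ≤ j → j < n → G.Adj (w j) (w (j + 1)))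
    (h₁ : HasSafeSpanningTree G K (Z 1 ∪ {w 2}) (w 2))
    (hw : ∀ j, 2 ≤ j → j ≤ n → w j ∈ Z j ∧ HasSafeSpanningTree G K (Z j) (w j))
    {j : ℕ} (hj : 2 ≤ j) (hjn : j ≤ n) :
    HasSafeSpanningTree G K (⋃ i ∈ Finset.Icc 1 j, Z i) (w j) := by
  induction j, hj using Nat.le_induction with
  | base =>
    obtain ⟨hw₂, hT₂⟩ := hw 2 le_rfl hjn
    have hdj : Disjoint (Z 1) (Z 2) := hdisj 1 2 le_rfl one_lt_two hjn
    have hinter : (Z 1 ∪ {w 2}) ∩ Z 2 = {w 2} := by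
      rw [Set.union_inter_distrib_right, Set.disjoint_iff_inter_eq_empty.1 hdj,
        Set.singleton_inter_of_mem hw₂, Set.empty_union]
    have hunion : Z 1 ∪ {w 2} ∪ Z 2 = ⋃ i ∈ Finset.Icc 1 2, Z i := by
      rw [biUnion_Icc_one_add_one, Set.union_assoc, Set.singleton_union,
        Set.insert_eq_of_mem hw₂]
      simp
    exact hunion ▸ h₁.union hT₂ hinter
  | succ j hj ih =>
    obtain ⟨hw', hT'⟩ := hw (j + 1) (by omega) hjn
    have hdj := disjoint_biUnion_Icc_one hdisj (j := j) (by omega)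
    have hpend := (ih (by omega)).insert
      (subset_biUnion_Icc_one (by omega) le_rfl (hw j hj (by omega)).1) (hcut j hj (by omega))
      (hpath j hj (by omega)) (Set.disjoint_right.1 hdj hw')
    have hinter : insert (w (j + 1)) (⋃ i ∈ Finset.Icc 1 j, Z i) ∩ Z (j + 1) = {w (j + 1)} := by
      rw [Set.insert_inter_of_mem hw', Set.disjoint_iff_inter_eq_empty.1 hdj, insert_empty_eq]
    have hglued := hpend.union hT' hinter
    rwa [Set.insert_union, Set.insert_eq_of_mem (Set.mem_union_right _ hw'),
      ← biUnion_Icc_one_add_one] at hglued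

end Spine

theorem back_spine_gives_cycle_hubs_general {V : Type*} [Fintype V] (K : ℕ)
    (hKeven : Even K) (G : SimpleGraph V)
    (ℓ : ℕ) (hℓ : 3 ≤ ℓ) (Z : ℕ → Set V) (W : Set V)
    (hW : W = ⋃ i ∈ Finset.Icc 1 (ℓ - 1), Z i)
    (hdisj : ∀ i j, 1 ≤ i → i < j → j ≤ ℓ - 1 → Disjoint (Z i) (Z j))
    (hcuts : ∀ i, 1 ≤ i → i ≤ ℓ - 1 → IsKCut G K (Z i))
    (hnoedge : ∀ i j, 1 ≤ i → i + 2 ≤ j → j ≤ ℓ - 1 →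
      ∀ u ∈ Z i, ∀ v ∈ Z j, ¬ G.Adj u v)
    (hhalf : ∀ i, 1 ≤ i → i ≤ ℓ - 2 →
      (cutEdges G (Z i) ∩ cutEdges G (Z (i + 1))).ncard = K / 2)
    (w : ℕ → V)
    (hpath : ∀ i, 2 ≤ i → i < ℓ → G.Adj (w i) (w (i + 1)))
    (hw2 : w 2 ∈ Z 2 ∧ w 2 ∈ hubSet G K (Z 1) ∧ w 2 ∈ hubSet G K (Z 2))
    (hwi : ∀ i, 3 ≤ i → i ≤ ℓ - 1 → w i ∈ Z i ∧ w i ∈ hubSet G K (Z i))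
    (hwl : w ℓ ∈ cutVerts G W \ W) :
    w (ℓ - 1) ∈ hubSet G K W ∧ w ℓ ∈ hubSet G K W := by
  subst hW
  have hw : ∀ j, 2 ≤ j → j ≤ ℓ - 1 → w j ∈ Z j ∧ HasSafeSpanningTree G K (Z j) (w j) := by
    intro j hj₂ hj
    obtain ⟨hwZ, hhub⟩ : w j ∈ Z j ∧ w j ∈ hubSet G K (Z j) := by
      rcases (show j = 2 ∨ 3 ≤ j by omega) with rfl | hj₃
      · exact ⟨hw2.1, hw2.2.2⟩
      · exact hwi j hj₃ hj
    have htree := (mem_hubSet_iff.1 hhub).2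
    rw [Set.union_singleton, Set.insert_eq_of_mem hwZ] at htree
    exact ⟨hwZ, htree⟩
  have hcut : ∀ j, 1 ≤ j → j ≤ ℓ - 1 →
      (cutEdges G (⋃ i ∈ Finset.Icc 1 j, Z i)).ncard = K :=
    fun j hj hjℓ => ncard_cutEdges_biUnion_Icc_one hKeven hdisj hnoedge
      (fun i hi hiℓ => (hcuts i hi hiℓ).2.2) (fun i hi hiℓ => hhalf i hi (by omega)) hj hjℓ
  have hspine := hasSafeSpanningTree_biUnion_Icc_one hdisj
    (fun j hj hjℓ => hcut j (by omega) hjℓ.le) (fun j hj hjℓ => hpath j hj (by omega))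
    (mem_hubSet_iff.1 hw2.2.1).2 hw (j := ℓ - 1) (by omega) le_rfl
  have hwW : w (ℓ - 1) ∈ ⋃ i ∈ Finset.Icc 1 (ℓ - 1), Z i :=
    subset_biUnion_Icc_one (by omega) le_rfl (hw (ℓ - 1) (by omega) le_rfl).1
  have hadj : G.Adj (w (ℓ - 1)) (w ℓ) := by
    simpa [Nat.sub_add_cancel (by omega : 1 ≤ ℓ)] using hpath (ℓ - 1) (by omega) (by omega)
  refine ⟨mem_hubSet_iff.2 ⟨mem_cutVerts_of_adj hadj hwW hwl.2, ?_⟩,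
    mem_hubSet_iff.2 ⟨hwl.1, ?_⟩⟩
  · rwa [Set.union_singleton, Set.insert_eq_of_mem hwW]
  · rw [Set.union_singleton]
    exact hspine.insert hwW (hcut (ℓ - 1) (by omega) le_rfl) hadj hwl.2

/-- (Back spines yield hubs for the cycle cut `W`, `K` even.) -/
theorem back_spine_gives_cycle_hubs {V : Type*} [Fintype V] (K : ℕ) (hKpos : 0 < K)
    (hKeven : Even K) (G : SimpleGraph V) (hG : KEdgeConnected G K)
    (ℓ : ℕ) (hℓ : 3 ≤ ℓ) (Z : ℕ → Set V) (W : Set V)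
    (hW : W = ⋃ i ∈ Finset.Icc 1 (ℓ - 1), Z i)
    (hWne : W ≠ Set.univ)
    (hdisj : ∀ i j, 1 ≤ i → i < j → j ≤ ℓ - 1 → Disjoint (Z i) (Z j))
    (hne : ∀ i, 1 ≤ i → i ≤ ℓ - 1 → (Z i).Nonempty)
    (hcuts : ∀ i, 1 ≤ i → i ≤ ℓ - 1 → IsKCut G K (Z i))
    (hcutW : IsKCut G K W)
    (hnoedge : ∀ i j, 1 ≤ i → i + 2 ≤ j → j ≤ ℓ - 1 →
      ∀ u ∈ Z i, ∀ v ∈ Z j, ¬ G.Adj u v)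
    (hhalf : ∀ i, 1 ≤ i → i ≤ ℓ - 2 →
      (cutEdges G (Z i) ∩ cutEdges G (Z (i + 1))).ncard = K / 2)
    (hhalf1 : (cutEdges G (Z 1) ∩ cutEdges G W).ncard = K / 2)
    (hhalfl : (cutEdges G (Z (ℓ - 1)) ∩ cutEdges G W).ncard = K / 2)
    (w : ℕ → V)
    (hpath : ∀ i, 2 ≤ i → i < ℓ → G.Adj (w i) (w (i + 1)))
    (hw2 : w 2 ∈ Z 2 ∧ w 2 ∈ hubSet G K (Z 1) ∧ w 2 ∈ hubSet G K (Z 2))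
    (hwi : ∀ i, 3 ≤ i → i ≤ ℓ - 1 → w i ∈ Z i ∧ w i ∈ hubSet G K (Z i))
    (hwl : w ℓ ∈ cutVerts G W \ W) :
    w (ℓ - 1) ∈ hubSet G K W ∧ w ℓ ∈ hubSet G K W :=
  back_spine_gives_cycle_hubs_general K hKeven G ℓ hℓ Z W hW hdisj hcuts hnoedge hhalf w hpath hw2
    hwi hwl
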